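/- With the setup of the previous statement, additionally define S⁻ as the least set such that: if (x₁ ∧ ⋯ ∧ xₙ → ⊥) ∈ C and all xⱼ with j ≠ i lie in S⁺, then xᵢ ∈ S⁻; and if (x₁ ∧ ⋯ ∧ xₙ → x) ∈ C with x ∈ S⁻ and all xⱼ with j ≠ i in S⁺, then xᵢ ∈ S⁻. Then any labeling J : X → Bool satisfying all implications in C satisfies J(x) = false for every x ∈ S⁻. -/
import Mathlib


/-- A Horn implication over `α`: a finite list of antecedents together with a
consequent which is either a data point (`some x`) or `⊥` (`none`).
A fact `⊤ → x` is the clause `([], some x)`. -/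
abbrev HornClause (α : Type*) := List α × Option α

/-- A labeling `J : α → Bool` satisfies a Horn implication. -/
def SatClause {α : Type*} (J : α → Bool) (c : HornClause α) : Prop :=
  (∀ y ∈ c.1, J y = true) →
    match c.2 with
    | some x => J x = true
    | none => ∃ y ∈ c.1, J y = false

/-- `Pos C x` : the data point `x` is forced positive (the set `S⁺`). -/
inductive Pos {α : Type*} (C : Set (HornClause α)) : α → Prop
  | intro (ante : List α) (x : α) (hc : (ante, some x) ∈ C)
      (h : ∀ y ∈ ante, Pos C y) : Pos C x

/-- `ForcedNeg C x` : the data point `x` is forced negative (the set `S⁻`):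
`xᵢ` is forced negative if it occurs in a goal clause all of whose other
antecedents are forced positive, or in a definite clause whose consequent is
forced negative and all of whose other antecedents are forced positive. -/
inductive ForcedNeg {α : Type*} (C : Set (HornClause α)) : α → Prop
  | goal (ante : List α) (xi : α) (hc : (ante, (none : Option α)) ∈ C)
      (hmem : xi ∈ ante) (h : ∀ y ∈ ante, y ≠ xi → Pos C y) : ForcedNeg C xi
  | defn (ante : List α) (x xi : α) (hc : (ante, some x) ∈ C)
      (hx : ForcedNeg C x) (hmem : xi ∈ ante)
      (h : ∀ y ∈ ante, y ≠ xi → Pos C y) : ForcedNeg C xi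

theorem pos_sound {α : Type*} (C : Set (HornClause α))
    (J : α → Bool) (hJ : ∀ c ∈ C, SatClause J c) :
    ∀ x, Pos C x → J x = true := by
  intro x hx
  induction hx with
  | intro ante x hc h ih => exact hJ _ hc ih

theorem forced_negative_sound {α : Type*} (X : Set α) (C : Set (HornClause α))
    (J : α → Bool) (hJ : ∀ c ∈ C, SatClause J c) :
    ∀ x, ForcedNeg C x → J x = false := by
  intro x hx
  induction hx with
  | goal ante xi hc hmem h =>
    by_contra hne
    have hall : ∀ y ∈ ante, J y = true := by
      intro y hy
      by_cases hyx : y = xi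
      · subst hyx; simpa using hne
      · exact pos_sound C J hJ y (h y hy hyx)
    obtain ⟨y, hy, hyf⟩ := hJ _ hc hall
    exact absurd (hall y hy) (by simp [hyf])
  | defn ante x xi hc hx hmem h ihx =>
    by_contra hne
    have hall : ∀ y ∈ ante, J y = true := by
      intro y hy
      by_cases hyx : y = xi
      · subst hyx; simpa using hne
      · exact pos_sound C J hJ y (h y hy hyx)
    have := hJ _ hc hall
    simp only [SatClause] at this
    rw [ihx] at this
    exact absurd this (by simp)
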